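/- arXiv:2001.04364 — 2 statements merged into one kernel-verified Lean document; each statement's English description precedes it below -/
import Mathlib

section
/- For all real numbers x, y > 0, one has (8/π) ∫₀^∞ x y t²/((x² + t²)² (y² + t²)) dt = 2y/(x + y)², and moreover 2y/(x + y)² ≤ 1/(2x). -/
/-!
Partial fractions give an elementary antiderivative of the integrand, built from `arctan (t / x)`,
`arctan (t / y)` and `t / (x² + t²)` when `x ≠ y`, and from `arctan (t / x)`, `t / (x² + t²)` and
`t / (x² + t²)²` when `x = y`. It vanishes at `0`, and its limit at `+∞` comes from the `arctan`
terms alone, so the integral is a combination of values `π / 2`. The inequality is `4xy ≤ (x + y)²`.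
-/

open MeasureTheory Real Filter Topology Set

lemma hasDerivAt_arctan_div {a : ℝ} (ha : a ≠ 0) (t : ℝ) :
    HasDerivAt (fun s => arctan (s / a)) (a / (a ^ 2 + t ^ 2)) t := by
  refine ((hasDerivAt_arctan (t / a)).comp t ((hasDerivAt_id t).div_const a)).congr_deriv ?_
  field_simp

lemma tendsto_arctan_div_atTop {a : ℝ} (ha : 0 < a) :
    Tendsto (fun s => arctan (s / a)) atTop (𝓝 (π / 2)) :=
  (tendsto_nhds_of_tendsto_nhdsWithin tendsto_arctan_atTop).comp (tendsto_id.atTop_div_const ha)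

lemma hasDerivAt_div_sq_add_sq {a : ℝ} (ha : a ≠ 0) (t : ℝ) :
    HasDerivAt (fun s => s / (a ^ 2 + s ^ 2)) ((a ^ 2 - t ^ 2) / (a ^ 2 + t ^ 2) ^ 2) t := by
  have hne : a ^ 2 + t ^ 2 ≠ 0 := by positivity
  refine ((hasDerivAt_id t).div ((hasDerivAt_pow 2 t).const_add (a ^ 2)) hne).congr_deriv ?_
  simp only [id]
  field_simp
  ring

lemma hasDerivAt_div_sq_add_sq_sq {a : ℝ} (ha : a ≠ 0) (t : ℝ) :
    HasDerivAt (fun s => s / (a ^ 2 + s ^ 2) ^ 2)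
      ((a ^ 2 - 3 * t ^ 2) / (a ^ 2 + t ^ 2) ^ 3) t := by
  have hne : (a ^ 2 + t ^ 2) ^ 2 ≠ 0 := by positivity
  refine ((hasDerivAt_id t).div (((hasDerivAt_pow 2 t).const_add (a ^ 2)).pow 2)
    hne).congr_deriv ?_
  simp only [id, Pi.pow_apply]
  field_simp
  ring

lemma tendsto_inv_sq_add_sq_atTop (a : ℝ) :
    Tendsto (fun s : ℝ => (a ^ 2 + s ^ 2)⁻¹) atTop (𝓝 0) :=
  (tendsto_atTop_add_const_left _ _ (tendsto_pow_atTop two_ne_zero)).inv_tendsto_atTop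

lemma tendsto_div_sq_add_sq_atTop (a : ℝ) :
    Tendsto (fun s : ℝ => s / (a ^ 2 + s ^ 2)) atTop (𝓝 0) := by
  have h : Tendsto (fun s : ℝ => a ^ 2 / s + s) atTop atTop :=
    (tendsto_const_nhds.div_atTop tendsto_id).add_atTop tendsto_id
  refine h.inv_tendsto_atTop.congr' ?_
  filter_upwards [eventually_gt_atTop 0] with s hs
  simp only [Pi.inv_apply]
  field_simp

lemma tendsto_div_sq_add_sq_sq_atTop (a : ℝ) :
    Tendsto (fun s : ℝ => s / (a ^ 2 + s ^ 2) ^ 2) atTop (𝓝 0) := by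
  simpa [div_eq_mul_inv, pow_two, mul_assoc] using
    (tendsto_div_sq_add_sq_atTop a).mul (tendsto_inv_sq_add_sq_atTop a)

section Integral

variable {x y : ℝ}

lemma integral_Ioi_of_ne (hx : 0 < x) (hy : 0 < y) (hxy : x ≠ y) :
    ∫ t in Ioi (0 : ℝ), x * y * t ^ 2 / ((x ^ 2 + t ^ 2) ^ 2 * (y ^ 2 + t ^ 2)) =
      π * y / (4 * (x + y) ^ 2) := by
  have hd : x ^ 2 - y ^ 2 ≠ 0 := by
    rw [sub_ne_zero, Ne, sq_eq_sq₀ hx.le hy.le]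
    exact hxy
  set c₁ := y * (x ^ 2 + y ^ 2) / (2 * (x ^ 2 - y ^ 2) ^ 2)
  set c₂ := -(x * y ^ 2) / (x ^ 2 - y ^ 2) ^ 2
  set c₃ := x * y / (2 * (x ^ 2 - y ^ 2))
  have hderiv : ∀ t ∈ Ici (0 : ℝ), HasDerivAt
      (fun s => c₁ * arctan (s / x) + c₂ * arctan (s / y) + c₃ * (s / (x ^ 2 + s ^ 2)))
      (x * y * t ^ 2 / ((x ^ 2 + t ^ 2) ^ 2 * (y ^ 2 + t ^ 2))) t := by
    intro t _
    refine ((((hasDerivAt_arctan_div hx.ne' t).const_mul c₁).add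
      ((hasDerivAt_arctan_div hy.ne' t).const_mul c₂)).add
      ((hasDerivAt_div_sq_add_sq hx.ne' t).const_mul c₃)).congr_deriv ?_
    have : x ^ 2 + t ^ 2 ≠ 0 := by positivity
    simp only [c₁, c₂, c₃]
    field_simp
    ring
  have hlim := (((tendsto_arctan_div_atTop hx).const_mul c₁).add
    ((tendsto_arctan_div_atTop hy).const_mul c₂)).add
    ((tendsto_div_sq_add_sq_atTop x).const_mul c₃)
  rw [integral_Ioi_of_hasDerivAt_of_nonneg' hderiv (fun t _ => by positivity) hlim]
  simp only [zero_div, arctan_zero, mul_zero, add_zero, sub_zero, c₁, c₂]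
  have : x + y ≠ 0 := by positivity
  field_simp
  ring

lemma integral_Ioi_self (hx : 0 < x) :
    ∫ t in Ioi (0 : ℝ), x * x * t ^ 2 / ((x ^ 2 + t ^ 2) ^ 2 * (x ^ 2 + t ^ 2)) =
      π * x / (4 * (x + x) ^ 2) := by
  have hderiv : ∀ t ∈ Ici (0 : ℝ), HasDerivAt
      (fun s => 1 / (8 * x) * arctan (s / x) + 1 / 8 * (s / (x ^ 2 + s ^ 2))
        + -x ^ 2 / 4 * (s / (x ^ 2 + s ^ 2) ^ 2))
      (x * x * t ^ 2 / ((x ^ 2 + t ^ 2) ^ 2 * (x ^ 2 + t ^ 2))) t := by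
    intro t _
    refine ((((hasDerivAt_arctan_div hx.ne' t).const_mul _).add
      ((hasDerivAt_div_sq_add_sq hx.ne' t).const_mul _)).add
      ((hasDerivAt_div_sq_add_sq_sq hx.ne' t).const_mul _)).congr_deriv ?_
    have : x ^ 2 + t ^ 2 ≠ 0 := by positivity
    field_simp
    ring
  have hlim := (((tendsto_arctan_div_atTop hx).const_mul (1 / (8 * x))).add
    ((tendsto_div_sq_add_sq_atTop x).const_mul (1 / 8))).add
    ((tendsto_div_sq_add_sq_sq_atTop x).const_mul (-x ^ 2 / 4))
  rw [integral_Ioi_of_hasDerivAt_of_nonneg' hderiv (fun t _ => by positivity) hlim]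
  simp only [zero_div, arctan_zero, mul_zero, add_zero, sub_zero]
  field_simp
  ring

lemma integral_Ioi_eq (hx : 0 < x) (hy : 0 < y) :
    ∫ t in Ioi (0 : ℝ), x * y * t ^ 2 / ((x ^ 2 + t ^ 2) ^ 2 * (y ^ 2 + t ^ 2)) =
      π * y / (4 * (x + y) ^ 2) := by
  rcases eq_or_ne x y with rfl | hxy
  exacts [integral_Ioi_self hx, integral_Ioi_of_ne hx hy hxy]

end Integral

/-- For all `x, y > 0`, `(8/π) ∫₀^∞ x y t² / ((x² + t²)² (y² + t²)) dt = 2y/(x+y)²`,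
and `2y/(x+y)² ≤ 1/(2x)`. -/
theorem stmt_2 (x y : ℝ) (hx : 0 < x) (hy : 0 < y) :
    (8 / π) * (∫ t in Set.Ioi (0 : ℝ),
        x * y * t ^ 2 / ((x ^ 2 + t ^ 2) ^ 2 * (y ^ 2 + t ^ 2))) = 2 * y / (x + y) ^ 2 ∧
    2 * y / (x + y) ^ 2 ≤ 1 / (2 * x) := by
  refine ⟨?_, ?_⟩
  · rw [integral_Ioi_eq hx hy]
    field_simp [pi_ne_zero]
    ring
  · rw [div_le_div_iff₀ (by positivity) (by positivity)]
    nlinarith [sq_nonneg (x - y)]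
end

section
/- Let V_ext : ℝ³ → [1, ∞) be C¹ with |∇V_ext(x)|² ≤ 2 V_ext(x)³ + C for all x. Then for every u ∈ C_c^∞(ℝ³), ‖(−Δ + V_ext)u‖²_{L²} ≥ ‖Δu‖²_{L²} − C‖u‖²_{L²}. -/
open MeasureTheory

noncomputable section

local notation "E3" => EuclideanSpace ℝ (Fin 3)

/-- The Laplacian `Δf(x) = ∑ᵢ ∂ᵢ∂ᵢ f(x)` on `ℝ³`. -/
def lap (f : E3 → ℝ) (x : E3) : ℝ :=
  ∑ i : Fin 3,
    fderiv ℝ (fun y => fderiv ℝ f y (EuclideanSpace.single i 1)) x (EuclideanSpace.single i 1)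


lemma pt_ineq (V C u s y A : ℝ) (hC : 0 < C) (hV : 1 ≤ V) (hA : 0 ≤ A) (hs : 0 ≤ s)
    (hA2 : A^2 ≤ 2*V^3 + C) (hy : y^2 ≤ (A*s)^2) :
    0 ≤ 2*V*s^2 + 2*u*y + V^2*u^2 + C*u^2 := by
  have hy' : |y| ≤ A*s := by
    have := sq_abs y; nlinarith [abs_nonneg y, mul_nonneg hA hs]
  have huy : -(A*s*(abs u)) ≤ u*y := by
    have h1 : |u*y| ≤ (abs u)*(A*s) := by
      rw [abs_mul]; exact mul_le_mul_of_nonneg_left hy' (abs_nonneg u)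
    have := neg_abs_le (u*y); nlinarith
  have hV0 : (0:ℝ) < V := lt_of_lt_of_le one_pos hV
  have key : 0 ≤ (2*V) * (2*V*s^2 + 2*u*y + V^2*u^2 + C*u^2) := by
    nlinarith [mul_le_mul_of_nonneg_left huy (by linarith : (0:ℝ) ≤ 4*V), sq_abs u,
      sq_nonneg (2*V*s - A*(abs u)),
      mul_nonneg (mul_nonneg hC.le (sq_nonneg u)) (by linarith : (0:ℝ) ≤ 2*V - 1),
      mul_le_mul_of_nonneg_right hA2 (sq_nonneg u)]
  nlinarith [key]

lemma euclid_norm_sq (b : E3) : ‖b‖ ^ 2 = ∑ i, b i ^ 2 := by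
  rw [EuclideanSpace.norm_eq, Real.sq_sqrt (by positivity)]
  simp [sq_abs]

lemma euclid_apply_sum (φ : E3 →L[ℝ] ℝ) (b : E3) :
    φ b = ∑ i, b i * φ (EuclideanSpace.single i 1) := by
  have hb : ∑ i, b i • EuclideanSpace.single i (1:ℝ) = b := by
    simpa [EuclideanSpace.basisFun_apply, EuclideanSpace.basisFun_repr] using
      (EuclideanSpace.basisFun (Fin 3) ℝ).sum_repr b
  conv_lhs => rw [← hb]
  rw [map_sum]
  simp [smul_eq_mul]

lemma ibp (f g : E3 → ℝ) (hf : ContDiff ℝ 1 f) (hf' : HasCompactSupport f)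
    (hg : ContDiff ℝ 1 g) (hg' : HasCompactSupport g) (v : E3) :
    ∫ x : E3, fderiv ℝ f x v * g x = - ∫ x : E3, fderiv ℝ g x v * f x := by
  obtain ⟨K1, hK1⟩ := hf.lipschitzWith_of_hasCompactSupport hf' one_ne_zero
  obtain ⟨K2, hK2⟩ := hg.lipschitzWith_of_hasCompactSupport hg' one_ne_zero
  have h := hK1.integral_lineDeriv_mul_eq (μ := volume) hK2 hg' v
  simp_rw [(hf.differentiable one_ne_zero).differentiableAt.lineDeriv_eq_fderiv,
    (hg.differentiable one_ne_zero).differentiableAt.lineDeriv_eq_fderiv, map_neg, neg_mul] at h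
  rw [h, integral_neg]

/-- If `V_ext ≥ 1` is `C¹` and `|∇V_ext|² ≤ 2V_ext³ + C`, then for every `u ∈ C_c^∞(ℝ³)`,
`‖(−Δ + V_ext)u‖²_{L²} ≥ ‖Δu‖²_{L²} − C‖u‖²_{L²}`. -/
theorem stmt_17 (Vext : E3 → ℝ) (C : ℝ) (hC : 0 < C)
    (hV1 : ∀ x, 1 ≤ Vext x) (hVC1 : ContDiff ℝ 1 Vext)
    (hVgrad : ∀ x, ‖fderiv ℝ Vext x‖ ^ 2 ≤ 2 * (Vext x) ^ 3 + C) :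
    ∀ u : E3 → ℝ, ContDiff ℝ (⊤ : ℕ∞) u → HasCompactSupport u →
      (∫ x : E3, (lap u x) ^ 2) - C * ∫ x : E3, (u x) ^ 2 ≤
        ∫ x : E3, (-lap u x + Vext x * u x) ^ 2 := by
  intro u hu h'u
  have hu1 : ContDiff ℝ 1 u := hu.of_le (by simp)
  set e : Fin 3 → E3 := fun i => EuclideanSpace.single i 1 with he
  set d : Fin 3 → E3 → ℝ := fun i x => fderiv ℝ u x (e i) with hd_def
  set Dv : Fin 3 → E3 → ℝ := fun i x => fderiv ℝ Vext x (e i) with hDv_def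
  set L : Fin 3 → E3 → ℝ := fun i x => fderiv ℝ (d i) x (e i) with hL_def
  set T : Fin 3 → E3 → ℝ := fun i x => (Vext x * d i x + u x * Dv i x) * d i x with hT_def
  have hlap : ∀ x, lap u x = ∑ i, L i x := fun x => rfl
  -- regularity
  have hd : ∀ i, ContDiff ℝ (⊤ : ℕ∞) (d i) := fun i => (hu.fderiv_right (m := (⊤ : ℕ∞)) (by simp)).clm_apply contDiff_const
  have hd' : ∀ i, HasCompactSupport (d i) := fun i => h'u.fderiv_apply ℝ (e i)
  have hdc : ∀ i, Continuous (d i) := fun i => (hd i).continuous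
  have hLc : ∀ i, Continuous (L i) :=
    fun i => (((hd i).fderiv_right (m := (⊤ : ℕ∞)) (by simp)).clm_apply contDiff_const).continuous
  have hL' : ∀ i, HasCompactSupport (L i) := fun i => (hd' i).fderiv_apply ℝ (e i)
  have hDvc : ∀ i, Continuous (Dv i) :=
    fun i => (hVC1.continuous_fderiv_apply one_ne_zero).comp (continuous_id.prodMk continuous_const)
  have hVc : Continuous Vext := hVC1.continuous
  have huc : Continuous u := hu.continuous
  -- integrability
  have intg : ∀ f : E3 → ℝ, Continuous f → HasCompactSupport f → Integrable f :=
    fun f c h => c.integrable_of_hasCompactSupport h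
  have hTc : ∀ i, Continuous (T i) :=
    fun i => ((hVc.mul (hdc i)).add (huc.mul (hDvc i))).mul (hdc i)
  have hT' : ∀ i, HasCompactSupport (T i) := fun i => (hd' i).mul_left
  have intT : ∀ i, Integrable (T i) := fun i => intg _ (hTc i) (hT' i)
  have hg' : HasCompactSupport (fun x => Vext x * u x) := h'u.mul_left
  have hgc : Continuous (fun x => Vext x * u x) := hVc.mul huc
  have intLig : ∀ i, Integrable (fun x => L i x * (Vext x * u x)) :=
    fun i => intg _ ((hLc i).mul hgc) ((hL' i).mul_right)
  have intL2 : ∀ i j, Integrable (fun x => L i x * L j x) :=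
    fun i j => intg _ ((hLc i).mul (hLc j)) ((hL' j).mul_left)
  have intlap2 : Integrable (fun x => (lap u x)^2) := by
    have : (fun x => (lap u x)^2) = fun x => ∑ i, ∑ j, L i x * L j x := by
      funext x; rw [hlap x, sq, Finset.sum_mul_sum]
    rw [this]
    exact integrable_finset_sum _ (fun i _ => integrable_finset_sum _ (fun j _ => intL2 i j))
  have intlapg : Integrable (fun x => lap u x * (Vext x * u x)) := by
    have : (fun x => lap u x * (Vext x * u x)) = fun x => ∑ i, L i x * (Vext x * u x) := by
      funext x; rw [hlap x, Finset.sum_mul]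
    rw [this]; exact integrable_finset_sum _ (fun i _ => intLig i)
  have intg2 : Integrable (fun x => (Vext x * u x)^2) :=
    intg _ (hgc.pow 2) (hg'.comp_left (g := fun t : ℝ => t^2) (by simp))
  have intu2 : Integrable (fun x => (u x)^2) :=
    intg _ (huc.pow 2) (h'u.comp_left (g := fun t : ℝ => t^2) (by simp))
  -- expansion
  have expand : (∫ x : E3, (-lap u x + Vext x * u x)^2) =
      (∫ x : E3, (lap u x)^2) - 2 * (∫ x : E3, lap u x * (Vext x * u x))
        + ∫ x : E3, (Vext x * u x)^2 := by
    have h1 : ∀ x : E3, (-lap u x + Vext x * u x)^2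
        = ((lap u x)^2 - 2 * (lap u x * (Vext x * u x))) + (Vext x * u x)^2 := by
      intro x; ring
    have i1 : Integrable (fun x : E3 => 2 * (lap u x * (Vext x * u x))) := intlapg.const_mul 2
    have i2 : Integrable (fun x : E3 => (lap u x)^2 - 2 * (lap u x * (Vext x * u x))) :=
      intlap2.sub i1
    simp_rw [h1]
    rw [integral_add i2 intg2, integral_sub intlap2 i1, integral_const_mul]
  -- integration by parts
  have cross : (∫ x : E3, lap u x * (Vext x * u x)) = - ∫ x : E3, ∑ i, T i x := by
    have h1 : (fun x : E3 => lap u x * (Vext x * u x))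
        = fun x => ∑ i, L i x * (Vext x * u x) := by
      funext x; rw [hlap x, Finset.sum_mul]
    rw [h1, integral_finset_sum _ (fun i _ => intLig i),
      integral_finset_sum _ (fun i _ => intT i), ← Finset.sum_neg_distrib]
    refine Finset.sum_congr rfl (fun i _ => ?_)
    simp only [hL_def, hT_def]
    have hder : ∀ x : E3, fderiv ℝ (fun y => Vext y * u y) x (e i)
        = Vext x * d i x + u x * Dv i x := by
      intro x
      rw [fderiv_fun_mul ((hVC1.differentiable one_ne_zero) x) ((hu1.differentiable one_ne_zero) x)]
      simp [hd_def, hDv_def, mul_comm]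
    have step : (∫ x : E3, fderiv ℝ (d i) x (e i) * (Vext x * u x))
        = - ∫ x : E3, fderiv ℝ (fun y => Vext y * u y) x (e i) * d i x :=
      ibp (d i) (fun x => Vext x * u x) ((hd i).of_le (by simp)) (hd' i)
        (hVC1.mul hu1) hg' (e i)
    rw [step]
    congr 1
    refine integral_congr_ae (Filter.Eventually.of_forall (fun x => ?_))
    show fderiv ℝ (fun y => Vext y * u y) x (e i) * d i x
      = (Vext x * d i x + u x * Dv i x) * d i x
    rw [hder x]
  -- pointwise positivity
  have pos : ∀ x : E3, 0 ≤ 2 * (∑ i, T i x) + (Vext x * u x)^2 + C * (u x)^2 := by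
    intro x
    set φ : E3 →L[ℝ] ℝ := fderiv ℝ Vext x with hφ
    set b : E3 := (EuclideanSpace.equiv (Fin 3) ℝ).symm (fun i => d i x) with hb
    have hbi : ∀ i, b i = d i x := fun i => rfl
    have h1 : (∑ i, T i x) = Vext x * ‖b‖^2 + u x * (φ b) := by
      rw [euclid_norm_sq, euclid_apply_sum, Finset.mul_sum, Finset.mul_sum,
        ← Finset.sum_add_distrib]
      refine Finset.sum_congr rfl (fun i _ => ?_)
      rw [hbi i]
      simp only [hT_def, hDv_def, hφ, he]
      ring
    have hy : (φ b)^2 ≤ (‖φ‖ * ‖b‖)^2 := by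
      have h2 := φ.le_opNorm b
      have h3 : |φ b| = ‖φ b‖ := rfl
      nlinarith [abs_nonneg (φ b), sq_abs (φ b), norm_nonneg (φ b)]
    have h4 := pt_ineq (Vext x) C (u x) ‖b‖ (φ b) ‖φ‖ hC (hV1 x) (norm_nonneg _)
      (norm_nonneg _) (hVgrad x) hy
    have h5 : 2 * (∑ i, T i x) + (Vext x * u x)^2 + C * (u x)^2
        = 2*(Vext x)*‖b‖^2 + 2*(u x)*(φ b) + (Vext x)^2*(u x)^2 + C*(u x)^2 := by
      rw [h1]; ring
    linarith
  -- conclusion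
  have intS : Integrable (fun x : E3 => ∑ i, T i x) := integrable_finset_sum _ (fun i _ => intT i)
  have nonneg : 0 ≤ ∫ x : E3, (2 * (∑ i, T i x) + (Vext x * u x)^2 + C * (u x)^2) :=
    integral_nonneg pos
  have j1 : Integrable (fun x : E3 => 2 * ∑ i, T i x) := intS.const_mul 2
  have j2 : Integrable (fun x : E3 => 2 * (∑ i, T i x) + (Vext x * u x)^2) := j1.add intg2
  rw [integral_add j2 (intu2.const_mul C),
    integral_add j1 intg2, integral_const_mul, integral_const_mul] at nonneg
  rw [expand, cross]
  linarith
end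
end
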